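/- Let m ≥ 3 be an integer and fix reals c > 0, λ > 0. Define, for t ≥ 0, μ(t) = (8c⁴ / (m²(m+2)λ⁴)) · { m·[ e^{−λt}(λ²t² + 3λt + 3) + λ²t²/2 − 3 ] + (λ²t² + 12)(1 − e^{−λt}) − 6λt(1 + e^{−λt}) }. Then μ is strictly increasing on (0, ∞). -/

import Mathlib

/-- The explicit formula for the 2-marginal second moment function `μ_{(2,2,0,…,0)}(t)` of the
`m`-dimensional symmetric Markov random flight with speed `c` and switching intensity `λ`. -/
noncomputable def momentFormula (m : ℕ) (c lam t : ℝ) : ℝ :=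
  8 * c ^ 4 / ((m : ℝ) ^ 2 * ((m : ℝ) + 2) * lam ^ 4) *
    ((m : ℝ) * (Real.exp (-(lam * t)) * (lam ^ 2 * t ^ 2 + 3 * lam * t + 3)
        + lam ^ 2 * t ^ 2 / 2 - 3)
      + (lam ^ 2 * t ^ 2 + 12) * (1 - Real.exp (-(lam * t)))
      - 6 * lam * t * (1 + Real.exp (-(lam * t))))

/-!
In the variable `s = λt` the formula is a positive constant times a profile `g_m(s)` with
`g_m'(s) = e^{-s} h_m(s)`, where
`h_m(s) = m s (e^s - 1 - s) + (2s - 6) e^s + s² + 4s + 6`.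
Since `h_m(0) = 0`, it suffices that `h_m' > 0` on `(0, ∞)`. For `m ≥ 1` the terms carrying `m`
are nonnegative, and dropping them to `m = 1` leaves `3 (1 - (1 - s) e^s)`, which is positive
because `1 - s < e^{-s}`.
-/

open Real Set

/-- The bracket of `momentFormula`, written in the variable `s = λt`. -/
noncomputable def momentProfile (M s : ℝ) : ℝ :=
  M * (exp (-s) * (s ^ 2 + 3 * s + 3) + s ^ 2 / 2 - 3) + (s ^ 2 + 12) * (1 - exp (-s))
    - 6 * s * (1 + exp (-s))

/-- `exp s` times the derivative of `momentProfile M` at `s`. -/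
noncomputable def momentProfileDerivNum (M s : ℝ) : ℝ :=
  M * s * (exp s - 1 - s) + (2 * s - 6) * exp s + s ^ 2 + 4 * s + 6

theorem momentFormula_eq_mul_momentProfile (m : ℕ) (c lam t : ℝ) :
    momentFormula m c lam t =
      8 * c ^ 4 / ((m : ℝ) ^ 2 * ((m : ℝ) + 2) * lam ^ 4) * momentProfile m (lam * t) := by
  simp only [momentFormula, momentProfile]
  ring

theorem strictMonoOn_Ici_of_hasDerivAt_pos {f f' : ℝ → ℝ} (hf : ∀ x, HasDerivAt f (f' x) x)
    (hf' : ∀ x, 0 < x → 0 < f' x) : StrictMonoOn f (Ici 0) := by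
  refine strictMonoOn_of_deriv_pos (convex_Ici 0)
    (fun x _ => (hf x).continuousAt.continuousWithinAt) fun x hx => ?_
  rw [interior_Ici] at hx
  rw [(hf x).deriv]
  exact hf' x hx

theorem hasDerivAt_momentProfile (M s : ℝ) :
    HasDerivAt (momentProfile M) (exp (-s) * momentProfileDerivNum M s) s := by
  have hE : HasDerivAt (fun x => exp (-x)) (-exp (-s)) s := by
    simpa using (hasDerivAt_neg s).exp
  have hsq : HasDerivAt (fun x : ℝ => x ^ 2) (2 * s) s := by simpa using hasDerivAt_pow 2 s
  have hid := hasDerivAt_id' s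
  have h := (((((hE.mul (((hsq.add (hid.const_mul 3)).add_const 3))).add
      (hsq.div_const 2)).sub_const 3).const_mul M).add
      ((hsq.add_const 12).mul (hE.const_sub 1))).sub ((hid.const_mul 6).mul (hE.const_add 1))
  refine h.congr_deriv ?_
  simp only [momentProfileDerivNum, Pi.add_apply, exp_neg]
  field_simp
  ring

theorem hasDerivAt_momentProfileDerivNum (M s : ℝ) :
    HasDerivAt (momentProfileDerivNum M)
      (M * (exp s - 1 - s) + M * s * (exp s - 1) + (2 * s - 4) * exp s + 2 * s + 4) s := by
  have hE := hasDerivAt_exp s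
  have hsq : HasDerivAt (fun x : ℝ => x ^ 2) (2 * s) s := by simpa using hasDerivAt_pow 2 s
  have hid := hasDerivAt_id' s
  have h := (((((hid.const_mul M).mul ((hE.sub_const 1).sub hid)).add
      (((hid.const_mul 2).sub_const 6).mul hE)).add hsq).add (hid.const_mul 4)).add_const 6
  refine h.congr_deriv ?_
  simp only [Pi.sub_apply]
  ring

theorem momentProfileDerivNum_deriv_pos {M s : ℝ} (hM : 1 ≤ M) (hs : 0 < s) :
    0 < M * (exp s - 1 - s) + M * s * (exp s - 1) + (2 * s - 4) * exp s + 2 * s + 4 := by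
  have hcoeff : 0 ≤ (exp s - 1 - s) + s * (exp s - 1) := by
    have hexp := add_one_le_exp s
    have hprod : 0 ≤ s * (exp s - 1) := mul_nonneg hs.le (by linarith)
    linarith
  have hkey : (1 - s) * exp s < 1 := by
    have h := add_one_lt_exp (neg_ne_zero.2 hs.ne')
    calc (1 - s) * exp s < exp (-s) * exp s := by gcongr; linarith
      _ = 1 := by rw [← exp_add, neg_add_cancel, exp_zero]
  nlinarith [mul_le_mul_of_nonneg_right hM hcoeff]

theorem momentProfileDerivNum_pos {M s : ℝ} (hM : 1 ≤ M) (hs : 0 < s) :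
    0 < momentProfileDerivNum M s := by
  have hmono := strictMonoOn_Ici_of_hasDerivAt_pos (hasDerivAt_momentProfileDerivNum M)
    fun x hx => momentProfileDerivNum_deriv_pos hM hx
  have hzero : momentProfileDerivNum M 0 = 0 := by simp [momentProfileDerivNum]
  simpa [hzero] using hmono self_mem_Ici hs.le hs

theorem momentProfile_strictMonoOn {M : ℝ} (hM : 1 ≤ M) : StrictMonoOn (momentProfile M) (Ici 0) :=
  strictMonoOn_Ici_of_hasDerivAt_pos (hasDerivAt_momentProfile M)
    fun _ hs => mul_pos (exp_pos _) (momentProfileDerivNum_pos hM hs)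

/-- The 2-marginal second moment function `μ` is strictly increasing on `(0, ∞)`. -/
theorem moment_strictMono (m : ℕ) (hm : 3 ≤ m) (c lam : ℝ) (hc : 0 < c) (hlam : 0 < lam) :
    StrictMonoOn (fun t => momentFormula m c lam t) (Set.Ioi (0 : ℝ)) := by
  have hm1 : (1 : ℝ) ≤ m := by exact_mod_cast (by omega : 1 ≤ m)
  have hconst : 0 < 8 * c ^ 4 / ((m : ℝ) ^ 2 * ((m : ℝ) + 2) * lam ^ 4) := by
    have : (0 : ℝ) < m := by linarith
    positivity
  intro s hs t ht hst
  simp only [momentFormula_eq_mul_momentProfile]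
  refine mul_lt_mul_of_pos_left ?_ hconst
  exact momentProfile_strictMonoOn hm1 (mul_pos hlam hs).le (mul_pos hlam ht).le
    (mul_lt_mul_of_pos_left hst hlam)
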